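/- Suppose 0 < ε ≤ 1/9 and 0 < θ ≤ 1/9, and X = (X_k, k ∈ ℤ) is a strictly stationary Markov chain satisfying Condition H(ε,θ). For each positive integer n, let u_n := (1/n)·E[(X_1 + X_2 + ⋯ + X_n)²]. Then u_1 ≤ u_2 ≤ u_3 ≤ ⋯, and lim_{n→∞} u_n = ε·[(2/θ) − 1]. -/

import Mathlib

open MeasureTheory ProbabilityTheory Filter Topology

noncomputable section

/-- A sequence `X = (X_k, k ∈ ℤ)` of real random variables is strictly stationary if for
every `n ≥ 1` and `j ∈ ℤ`, `(X_1, …, X_n)` has the same distribution as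
`(X_{1+j}, …, X_{n+j})`. -/
def IsStrictlyStationary {Ω : Type*} [MeasurableSpace Ω] (P : Measure Ω)
    (X : ℤ → Ω → ℝ) : Prop :=
  ∀ (n : ℕ) (j : ℤ),
    Measure.map (fun ω => fun i : Fin n => X (1 + (i : ℤ)) ω) P =
    Measure.map (fun ω => fun i : Fin n => X (1 + j + (i : ℤ)) ω) P

/-- `X` is a Markov chain: for every `n ∈ ℤ` and Borel set `B`,
`P(X_{n+1} ∈ B | σ(X_k, k ≤ n)) = P(X_{n+1} ∈ B | X_n)` almost surely (expressed via
conditional expectations of indicator functions). -/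
def IsMarkovChain {Ω : Type*} [MeasurableSpace Ω] (P : Measure Ω)
    (X : ℤ → Ω → ℝ) : Prop :=
  ∀ (n : ℤ) (B : Set ℝ), MeasurableSet B →
    (P[(fun ω => Set.indicator B (fun _ => (1 : ℝ)) (X (n + 1) ω)) |
        ⨆ k : {k : ℤ // k ≤ n}, MeasurableSpace.comap (X k) inferInstance])
      =ᵐ[P]
    (P[(fun ω => Set.indicator B (fun _ => (1 : ℝ)) (X (n + 1) ω)) |
        MeasurableSpace.comap (X n) inferInstance])

/-- Condition `H(ε,θ)`: `X` is a strictly stationary Markov chain with state space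
`{−1,0,1}`, marginal distribution `π^{(ε)}`, and one-step transition probabilities given
by the matrix `ℙ^{(ε,θ)}` (with `θ* := θ/(1−ε)`). Conditional probabilities are expressed
via `ProbabilityTheory.cond`. -/
def CondH {Ω : Type*} [MeasurableSpace Ω] (P : Measure Ω) (X : ℤ → Ω → ℝ)
    (ε θ : ℝ) : Prop :=
  IsStrictlyStationary P X ∧ IsMarkovChain P X ∧
  (∀ k, Measurable (X k)) ∧
  (∀ k ω, X k ω ∈ ({-1, 0, 1} : Set ℝ)) ∧
  P {ω | X 0 ω = 0} = ENNReal.ofReal (1 - ε) ∧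
  P {ω | X 0 ω = -1} = ENNReal.ofReal (ε / 2) ∧
  P {ω | X 0 ω = 1} = ENNReal.ofReal (ε / 2) ∧
  ProbabilityTheory.cond P {ω | X 0 ω = 0} {ω | X 1 ω = 0}
      = ENNReal.ofReal (1 - (θ / (1 - ε)) * ε) ∧
  ProbabilityTheory.cond P {ω | X 0 ω = 0} {ω | X 1 ω = -1}
      = ENNReal.ofReal ((θ / (1 - ε)) * ε / 2) ∧
  ProbabilityTheory.cond P {ω | X 0 ω = 0} {ω | X 1 ω = 1}
      = ENNReal.ofReal ((θ / (1 - ε)) * ε / 2) ∧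
  ProbabilityTheory.cond P {ω | X 0 ω = -1} {ω | X 1 ω = -1}
      = ENNReal.ofReal (1 - θ) ∧
  ProbabilityTheory.cond P {ω | X 0 ω = 1} {ω | X 1 ω = 1}
      = ENNReal.ofReal (1 - θ) ∧
  ProbabilityTheory.cond P {ω | X 0 ω = -1} {ω | X 1 ω = 0}
      = ENNReal.ofReal θ ∧
  ProbabilityTheory.cond P {ω | X 0 ω = 1} {ω | X 1 ω = 0}
      = ENNReal.ofReal θ ∧
  ProbabilityTheory.cond P {ω | X 0 ω = -1} {ω | X 1 ω = 1} = 0 ∧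
  ProbabilityTheory.cond P {ω | X 0 ω = 1} {ω | X 1 ω = -1} = 0

/-! From `±1` the chain stays put with probability `1 - θ` and never jumps to `∓1`, while from `0`
it jumps to `1` and to `-1` with equal probabilities; hence `E[X_{n+1} | X_k, k ≤ n] = (1 - θ) X_n`
and `E[X_k X_{k+m}] = ε (1 - θ)^m`. Writing `S_n = X_1 + ⋯ + X_n`,
`E[S_{n+1}^2] - E[S_n^2] = 2 E[X_{n+1} S_{n+1}] - E[X_{n+1}^2] = ε (2 ∑_{m ≤ n} (1 - θ)^m - 1)`,
so `u_n` is the Cesàro mean of a nondecreasing sequence with limit `ε (2/θ - 1)`. -/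

open Finset

section FiniteRange

variable {Ω α : Type*} [MeasurableSpace Ω] [MeasurableSpace α] [MeasurableSingletonClass α]
  {μ : Measure Ω} {Y : Ω → α} {S : Finset α}

theorem integral_comp_mul_eq_sum (hY : Measurable Y) (hS : ∀ ω, Y ω ∈ S) (h : α → ℝ)
    {Z : Ω → ℝ} (hZ : Integrable Z μ) :
    ∫ ω, h (Y ω) * Z ω ∂μ = ∑ a ∈ S, h a * ∫ ω in Y ⁻¹' {a}, Z ω ∂μ := by
  have hsplit : ∀ ω, h (Y ω) * Z ω = ∑ a ∈ S, (Y ⁻¹' {a}).indicator (fun ω => h a * Z ω) ω := by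
    intro ω
    rw [sum_eq_single_of_mem (Y ω) (hS ω)]
    · simp
    · intro b _ hb
      simp [Ne.symm hb]
  simp_rw [hsplit]
  rw [integral_finsetSum _ fun a _ =>
    (hZ.const_mul (h a)).indicator (hY (measurableSet_singleton a))]
  refine sum_congr rfl fun a _ => ?_
  rw [integral_indicator (hY (measurableSet_singleton a)), integral_const_mul]

theorem integral_comp_eq_sum [IsFiniteMeasure μ] (hY : Measurable Y) (hS : ∀ ω, Y ω ∈ S)
    (h : α → ℝ) : ∫ ω, h (Y ω) ∂μ = ∑ a ∈ S, h a * μ.real (Y ⁻¹' {a}) := by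
  simpa using integral_comp_mul_eq_sum hY hS h (integrable_const (1 : ℝ))

theorem condExp_comap_ae_eq_comp [IsFiniteMeasure μ] (hY : Measurable Y) (hS : ∀ ω, Y ω ∈ S)
    {Z : Ω → ℝ} (hZ : Integrable Z μ) {g : α → ℝ} (hg : Measurable g)
    (hatoms : ∀ a ∈ S, ∫ ω in Y ⁻¹' {a}, Z ω ∂μ = ∫ ω in Y ⁻¹' {a}, g (Y ω) ∂μ) :
    μ[Z | MeasurableSpace.comap Y inferInstance] =ᵐ[μ] fun ω => g (Y ω) := by
  have hgY : Integrable (fun ω => g (Y ω)) μ :=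
    .of_bound (hg.comp hY).aestronglyMeasurable (∑ a ∈ S, |g a|) <| ae_of_all _ fun ω =>
      single_le_sum (f := fun a => |g a|) (fun a _ => abs_nonneg _) (hS ω)
  refine (ae_eq_condExp_of_forall_setIntegral_eq hY.comap_le hZ (fun _ _ _ => hgY.integrableOn)
    ?_ (hg.comp (comap_measurable Y)).aestronglyMeasurable).symm
  rintro _ ⟨A, hA, rfl⟩ -
  have hrestrict : ∀ f : Ω → ℝ,
      ∫ ω in Y ⁻¹' A, f ω ∂μ = ∫ ω, A.indicator 1 (Y ω) * f ω ∂μ := by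
    intro f
    rw [← integral_indicator (hY hA)]
    congr 1 with ω
    by_cases hω : Y ω ∈ A <;> simp [hω]
  rw [hrestrict, hrestrict, integral_comp_mul_eq_sum hY hS _ hZ,
    integral_comp_mul_eq_sum hY hS _ hgY]
  exact sum_congr rfl fun a ha => by rw [hatoms a ha]

end FiniteRange

theorem Monotone.inv_mul_sum_range_le_succ {c : ℕ → ℝ} (hc : Monotone c) {n : ℕ} (hn : 0 < n) :
    (n : ℝ)⁻¹ * ∑ i ∈ range n, c i ≤ ((n : ℝ) + 1)⁻¹ * ∑ i ∈ range (n + 1), c i := by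
  have hle : ∑ i ∈ range n, c i ≤ n * c n := by
    simpa using sum_le_sum fun i hi => hc (mem_range.1 hi).le
  rw [sum_range_succ, ← div_eq_inv_mul, ← div_eq_inv_mul,
    div_le_div_iff₀ (by positivity) (by positivity)]
  linarith

theorem sum_Icc_one_eq_sum_range {M : Type*} [AddCommMonoid M] (f : ℤ → M) (n : ℕ) :
    ∑ k ∈ Icc (1 : ℤ) n, f k = ∑ i ∈ range n, f (1 + i) := by
  simp [Int.Icc_eq_finset_map, sum_map]

theorem eq_indicator_sub_indicator {y : ℝ} (hy : y ∈ ({-1, 0, 1} : Finset ℝ)) :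
    y = ({1} : Set ℝ).indicator (fun _ => 1) y - ({-1} : Set ℝ).indicator (fun _ => 1) y := by
  simp only [Finset.mem_insert, Finset.mem_singleton] at hy
  rcases hy with rfl | rfl | rfl <;> norm_num

section Stationary

variable {Ω : Type*} [MeasurableSpace Ω] {P : Measure Ω} {X : ℤ → Ω → ℝ}

theorem IsStrictlyStationary.map_eq (hX : IsStrictlyStationary P X) (m : ℕ) (j j' : ℤ) :
    P.map (fun ω (i : Fin m) => X (j + i) ω) = P.map (fun ω (i : Fin m) => X (j' + i) ω) := by
  have h := fun j : ℤ => hX m (j - 1)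
  simp only [add_sub_cancel] at h
  rw [← h j, ← h j']

theorem IsStrictlyStationary.measure_inter_succ (hX : IsStrictlyStationary P X)
    (hm : ∀ k, Measurable (X k)) (n : ℤ) {A B : Set ℝ} (hA : MeasurableSet A)
    (hB : MeasurableSet B) :
    P (X n ⁻¹' A ∩ X (n + 1) ⁻¹' B) = P (X 0 ⁻¹' A ∩ X 1 ⁻¹' B) := by
  have hpair : ∀ j : ℤ, P (X j ⁻¹' A ∩ X (j + 1) ⁻¹' B) =
      P.map (fun ω (i : Fin 2) => X (j + i) ω) ((fun v => v 0) ⁻¹' A ∩ (fun v => v 1) ⁻¹' B) := by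
    intro j
    rw [Measure.map_apply (measurable_pi_lambda _ fun i => hm _)
      ((measurable_pi_apply 0 hA).inter (measurable_pi_apply 1 hB))]
    congr 1 with ω
    simp
  rw [hpair n, hX.map_eq 2 n 0, ← hpair 0, zero_add]

theorem IsStrictlyStationary.measure_preimage_eq (hX : IsStrictlyStationary P X)
    (hm : ∀ k, Measurable (X k)) (n : ℤ) {A : Set ℝ} (hA : MeasurableSet A) :
    P (X n ⁻¹' A) = P (X 0 ⁻¹' A) := by
  simpa using hX.measure_inter_succ hm n hA MeasurableSet.univ

end Stationary

namespace CondH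

variable {Ω : Type*} [MeasurableSpace Ω] {P : Measure Ω} {X : ℤ → Ω → ℝ} {ε θ : ℝ}

theorem measurable (hX : CondH P X ε θ) (k : ℤ) : Measurable (X k) := hX.2.2.1 k

theorem mem (hX : CondH P X ε θ) (k : ℤ) (ω : Ω) : X k ω ∈ ({-1, 0, 1} : Finset ℝ) := by
  simpa using hX.2.2.2.1 k ω

theorem measurableSet_eq (hX : CondH P X ε θ) (k : ℤ) (a : ℝ) :
    MeasurableSet {ω | X k ω = a} :=
  hX.measurable k (measurableSet_singleton a)

theorem memLp_top (hX : CondH P X ε θ) (k : ℤ) : MemLp (X k) ⊤ P :=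
  memLp_top_of_bound (hX.measurable k).aestronglyMeasurable 1 <| ae_of_all _ fun ω => by
    have h := hX.mem k ω
    simp only [Finset.mem_insert, Finset.mem_singleton] at h
    rcases h with h | h | h <;> simp [h]

theorem measureReal_inter_succ [IsFiniteMeasure P] (hX : CondH P X ε θ) (n : ℤ) (a b : ℝ) :
    P.real ({ω | X n ω = a} ∩ {ω | X (n + 1) ω = b}) =
      (P[{ω | X 1 ω = b} | {ω | X 0 ω = a}]).toReal * P.real {ω | X n ω = a} := by
  have hpair := hX.1.measure_inter_succ hX.measurable n (measurableSet_singleton a)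
    (measurableSet_singleton b)
  have hmarg := hX.1.measure_preimage_eq hX.measurable n (measurableSet_singleton a)
  simp only [Set.preimage, Set.mem_singleton_iff] at hpair hmarg
  rw [measureReal_def, measureReal_def, hpair,
    ← cond_mul_eq_inter (hX.measurableSet_eq 0 a), hmarg,
    ENNReal.toReal_mul]

theorem setIntegral_succ [IsFiniteMeasure P] (hX : CondH P X ε θ) (hθ : θ ≤ 1) (n : ℤ) {a : ℝ}
    (ha : a ∈ ({-1, 0, 1} : Finset ℝ)) :
    ∫ ω in {ω | X n ω = a}, X (n + 1) ω ∂P = ∫ ω in {ω | X n ω = a}, (1 - θ) * X n ω ∂P := by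
  have hconst : ∫ ω in {ω | X n ω = a}, (1 - θ) * X n ω ∂P =
      (1 - θ) * a * P.real {ω | X n ω = a} := by
    rw [setIntegral_congr_fun (hX.measurableSet_eq n a) fun ω (hω : X n ω = a) => by rw [hω],
      setIntegral_const, smul_eq_mul, mul_comm]
  rw [hconst, integral_comp_eq_sum (μ := P.restrict _) (hX.measurable (n + 1)) (hX.mem (n + 1))
    (fun x => x)]
  have htransition : ∀ b, (P.restrict {ω | X n ω = a}).real (X (n + 1) ⁻¹' {b}) =
      (P[{ω | X 1 ω = b} | {ω | X 0 ω = a}]).toReal * P.real {ω | X n ω = a} := fun b => by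
    rw [measureReal_restrict_apply (hX.measurable (n + 1) (measurableSet_singleton b)),
      Set.inter_comm]
    exact hX.measureReal_inter_succ n a b
  simp only [htransition]
  obtain ⟨-, -, -, -, -, -, -, -, hc0m, hc0p, hcmm, hcpp, -, -, hcmp, hcpm⟩ := hX
  simp only [Finset.mem_insert, Finset.mem_singleton] at ha
  rcases ha with rfl | rfl | rfl <;> norm_num [hc0m, hc0p, hcmm, hcpp, hcmp, hcpm, hθ, sub_mul]

theorem condExp_comap_succ [IsFiniteMeasure P] (hX : CondH P X ε θ) (hθ : θ ≤ 1) (n : ℤ) :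
    P[X (n + 1) | MeasurableSpace.comap (X n) inferInstance] =ᵐ[P] fun ω => (1 - θ) * X n ω :=
  condExp_comap_ae_eq_comp (hX.measurable n) (hX.mem n) ((hX.memLp_top (n + 1)).integrable le_top)
    (by fun_prop) fun _ ha => hX.setIntegral_succ hθ n ha

theorem condExp_past_succ [IsFiniteMeasure P] (hX : CondH P X ε θ) (n : ℤ) :
    P[X (n + 1) | ⨆ k : {k : ℤ // k ≤ n}, MeasurableSpace.comap (X k) inferInstance] =ᵐ[P]
      P[X (n + 1) | MeasurableSpace.comap (X n) inferInstance] := by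
  have hind : ∀ b : ℝ,
      Integrable (fun ω => ({b} : Set ℝ).indicator (fun _ => (1 : ℝ)) (X (n + 1) ω)) P :=
    fun b => .of_bound ((measurable_const.indicator (measurableSet_singleton b)).comp
      (hX.measurable _)).aestronglyMeasurable 1 <| ae_of_all _ fun ω => by
      by_cases h : X (n + 1) ω = b <;> simp [h]
  have hsplit : X (n + 1) = (fun ω => ({1} : Set ℝ).indicator (fun _ => (1 : ℝ)) (X (n + 1) ω)) -
      fun ω => ({-1} : Set ℝ).indicator (fun _ => (1 : ℝ)) (X (n + 1) ω) :=
    funext fun ω => eq_indicator_sub_indicator (hX.mem (n + 1) ω)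
  rw [hsplit]
  have hmarkov := hX.2.1 n
  exact (condExp_sub (hind 1) (hind (-1)) _).trans <|
    ((hmarkov _ (measurableSet_singleton 1)).sub (hmarkov _ (measurableSet_singleton (-1)))).trans
      (condExp_sub (hind 1) (hind (-1)) _).symm

theorem integral_mul_succ [IsFiniteMeasure P] (hX : CondH P X ε θ) (hθ : θ ≤ 1) {k n : ℤ}
    (hkn : k ≤ n) :
    ∫ ω, X k ω * X (n + 1) ω ∂P = (1 - θ) * ∫ ω, X k ω * X n ω ∂P := by
  have hF : ⨆ i : {i : ℤ // i ≤ n}, MeasurableSpace.comap (X i) inferInstance ≤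
      ‹MeasurableSpace Ω› := iSup_le fun i => (hX.measurable i).comap_le
  have hXk : StronglyMeasurable[⨆ i : {i : ℤ // i ≤ n}, MeasurableSpace.comap (X i) inferInstance]
      (X k) :=
    ((comap_measurable (X k)).mono (le_iSup_of_le (⟨k, hkn⟩ : {i : ℤ // i ≤ n}) le_rfl)
      le_rfl).stronglyMeasurable
  have hL := hX.memLp_top
  calc ∫ ω, X k ω * X (n + 1) ω ∂P = ∫ ω, P[X k * X (n + 1) |
        ⨆ i : {i : ℤ // i ≤ n}, MeasurableSpace.comap (X i) inferInstance] ω ∂P :=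
        (integral_condExp hF).symm
    _ = ∫ ω, X k ω * ((1 - θ) * X n ω) ∂P := by
        refine integral_congr_ae ?_
        filter_upwards [condExp_mul_of_stronglyMeasurable_left hXk
            (((hL (n + 1)).mul (hL k)).integrable le_top) ((hL (n + 1)).integrable le_top),
          hX.condExp_past_succ n, hX.condExp_comap_succ hθ n] with ω h₁ h₂ h₃
        rw [h₁, Pi.mul_apply, h₂, h₃]
    _ = (1 - θ) * ∫ ω, X k ω * X n ω ∂P := by
        simp_rw [mul_left_comm (X k _)]
        exact integral_const_mul _ _

theorem integral_mul_self [IsFiniteMeasure P] (hX : CondH P X ε θ) (hε : 0 ≤ ε) (k : ℤ) :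
    ∫ ω, X k ω * X k ω ∂P = ε := by
  have hmarg : ∀ a, P.real (X k ⁻¹' {a}) = P.real {ω | X 0 ω = a} := fun a => by
    rw [measureReal_def, hX.1.measure_preimage_eq hX.measurable k (measurableSet_singleton a)]
    rfl
  refine (integral_comp_eq_sum (hX.measurable k) (hX.mem k) (fun x => x * x)).trans ?_
  obtain ⟨-, -, -, -, -, hPm, hPp, -⟩ := hX
  norm_num [hmarg, measureReal_def, hPm, hPp, ENNReal.toReal_ofReal (by positivity : 0 ≤ ε / 2)]

theorem integral_mul_add [IsFiniteMeasure P] (hX : CondH P X ε θ) (hε : 0 ≤ ε) (hθ : θ ≤ 1)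
    (k : ℤ) (m : ℕ) :
    ∫ ω, X k ω * X (k + m) ω ∂P = ε * (1 - θ) ^ m := by
  induction m with
  | zero => simpa using hX.integral_mul_self hε k
  | succ m ih =>
    rw [Nat.cast_succ, ← add_assoc,
      hX.integral_mul_succ hθ (le_add_of_nonneg_right (Nat.cast_nonneg m)), ih, pow_succ]
    ring

theorem integral_mul_sum_range [IsFiniteMeasure P] (hX : CondH P X ε θ) (hε : 0 ≤ ε)
    (hθ : θ ≤ 1) (n : ℕ) :
    ∫ ω, ∑ i ∈ range (n + 1), X (1 + i) ω * X (1 + n) ω ∂P =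
      ε * ∑ m ∈ range (n + 1), (1 - θ) ^ m := by
  have hL := hX.memLp_top
  rw [integral_finsetSum _ fun (i : ℕ) _ => ((hL (1 + n)).mul' (hL (1 + i))).integrable le_top,
    mul_sum, ← sum_range_reflect (fun m => ε * (1 - θ) ^ m)]
  refine sum_congr rfl fun i hi => ?_
  have hidx : (1 + i : ℤ) + ((n + 1 - 1 - i : ℕ) : ℤ) = 1 + n := by
    have := mem_range.1 hi
    omega
  rw [← hX.integral_mul_add hε hθ, hidx]

theorem integral_sq_sum_range [IsFiniteMeasure P] (hX : CondH P X ε θ) (hε : 0 ≤ ε)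
    (hθ : θ ≤ 1) (n : ℕ) :
    ∫ ω, (∑ i ∈ range n, X (1 + i) ω) ^ 2 ∂P =
      ∑ i ∈ range n, ε * (2 * ∑ m ∈ range (i + 1), (1 - θ) ^ m - 1) := by
  have hL := hX.memLp_top
  induction n with
  | zero => simp
  | succ n ih =>
    have hsplit : ∀ ω, (∑ i ∈ range (n + 1), X (1 + i) ω) ^ 2 =
        (∑ i ∈ range n, X (1 + i) ω) ^ 2 + (2 * ∑ i ∈ range (n + 1), X (1 + i) ω * X (1 + n) ω
          - X (1 + n) ω * X (1 + n) ω) := fun ω => by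
      rw [← sum_mul, sum_range_succ]
      ring
    have hsq : Integrable (fun ω => (∑ i ∈ range n, X (1 + i) ω) ^ 2) P :=
      ((memLp_finsetSum (range n) fun (i : ℕ) _ => hL (1 + i)).mono_exponent
        (p := 2) le_top).integrable_sq
    have hcross : Integrable (fun ω => 2 * ∑ i ∈ range (n + 1), X (1 + i) ω * X (1 + n) ω) P :=
      ((memLp_finsetSum _ fun (i : ℕ) _ => (hL (1 + n)).mul' (hL (1 + i))).integrable
        le_top).const_mul 2
    have hlast : Integrable (fun ω => X (1 + n) ω * X (1 + n) ω) P :=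
      ((hL (1 + n)).mul' (hL (1 + n))).integrable le_top
    simp_rw [hsplit]
    rw [integral_add hsq (by exact hcross.sub hlast), integral_sub hcross hlast,
      integral_const_mul, hX.integral_mul_self hε, hX.integral_mul_sum_range hε hθ, ih,
      sum_range_succ (fun i => ε * (2 * ∑ m ∈ range (i + 1), (1 - θ) ^ m - 1))]
    ring

end CondH

/-- Lemma 5.3(9) of the paper: under Condition `H(ε,θ)`, with
`u_n := (1/n)·E[(X_1 + ⋯ + X_n)²]`, the sequence `(u_n)` is nondecreasing and
`u_n → ε[(2/θ) − 1]`. -/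
theorem stmt10 {Ω : Type*} [MeasurableSpace Ω] (P : Measure Ω) [IsProbabilityMeasure P]
    (ε θ : ℝ) (hε : 0 < ε ∧ ε ≤ 1 / 9) (hθ : 0 < θ ∧ θ ≤ 1 / 9)
    (X : ℤ → Ω → ℝ) (hX : CondH P X ε θ) :
    (∀ n : ℕ, 0 < n →
      (1 / (n : ℝ)) * ∫ ω, (∑ k ∈ Finset.Icc (1 : ℤ) (n : ℤ), X k ω) ^ 2 ∂P ≤
        (1 / ((n : ℝ) + 1)) *
          ∫ ω, (∑ k ∈ Finset.Icc (1 : ℤ) ((n : ℤ) + 1), X k ω) ^ 2 ∂P) ∧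
    Tendsto (fun n : ℕ =>
        (1 / (n : ℝ)) * ∫ ω, (∑ k ∈ Finset.Icc (1 : ℤ) (n : ℤ), X k ω) ^ 2 ∂P)
      atTop (nhds (ε * (2 / θ - 1))) := by
  have hθ1 : θ ≤ 1 := by linarith
  set c : ℕ → ℝ := fun i => ε * (2 * ∑ m ∈ range (i + 1), (1 - θ) ^ m - 1)
  have hu : ∀ n : ℕ, ∫ ω, (∑ k ∈ Icc (1 : ℤ) n, X k ω) ^ 2 ∂P = ∑ i ∈ range n, c i :=
    fun n => by simp_rw [sum_Icc_one_eq_sum_range]; exact hX.integral_sq_sum_range hε.1.le hθ1 n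
  have hc_mono : Monotone c := monotone_nat_of_le_succ fun i => by
    have := pow_nonneg (sub_nonneg.2 hθ1) (i + 1)
    simp only [c, sum_range_succ _ (i + 1)]
    nlinarith [hε.1]
  have hc_lim : Tendsto c atTop (𝓝 (ε * (2 / θ - 1))) := by
    have hgeom := (hasSum_geometric_of_lt_one (sub_nonneg.2 hθ1) (by linarith)).tendsto_sum_nat
    rw [show ε * (2 / θ - 1) = ε * (2 * (1 - (1 - θ))⁻¹ - 1) by
      rw [sub_sub_cancel, div_eq_mul_inv]]
    exact (((hgeom.comp (tendsto_add_atTop_nat 1)).const_mul 2).sub_const 1).const_mul ε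
  refine ⟨fun n hn => ?_, ?_⟩
  · have hu' := hu (n + 1)
    push_cast at hu'
    simpa only [one_div, hu, hu'] using hc_mono.inv_mul_sum_range_le_succ hn
  · simpa only [one_div, hu] using hc_lim.cesaro
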